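/- arXiv:2006.12083 — 3 statements merged into one kernel-verified Lean document; each statement's English description precedes it below -/
import Mathlib

section
/- Let u_1,...,u_n ∈ C^d satisfy sum_{i=1}^n u_i u_i* = (n/d)·I with n ≤ 2d−1. Then for any signs ε_1,...,ε_n ∈ {−1,1}, the operator norm of sum_{i=1}^n ε_i u_i u_i* equals n/d. -/
open Matrix BigOperators

noncomputable def outer {d : ℕ} (u : EuclideanSpace ℂ (Fin d)) :
    Matrix (Fin d) (Fin d) ℂ :=
  Matrix.vecMulVec u (star u)

noncomputable def specNorm {d : ℕ} (A : Matrix (Fin d) (Fin d) ℂ) : ℝ :=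
  ‖Matrix.toEuclideanCLM (𝕜 := ℂ) A‖

/-! With `c = n / d`, Cauchy–Schwarz and the tight-frame identity `∑ |⟪uᵢ, x⟫|² = c ‖x‖²` give
`|⟪Ax, y⟫| ≤ ∑ |⟪uᵢ, x⟫| |⟪uᵢ, y⟫| ≤ c ‖x‖ ‖y‖` for `A = ∑ εᵢ uᵢuᵢ*`, so `‖A‖ ≤ c`. Conversely,
as `n < 2d`, one of the two sign classes has fewer than `d` members, and a nonzero vector orthogonal
to the `uᵢ` of that class is an eigenvector of `A` with eigenvalue `±c`. -/

open Finset InnerProductSpace Module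
open scoped InnerProductSpace

lemma Finset.exists_card_filter_ne_lt {ι α : Type*} [Fintype ι] [DecidableEq α] {f : ι → α}
    {p q : α} (hf : ∀ i, f i = p ∨ f i = q) {d : ℕ} (hcard : Fintype.card ι < 2 * d) :
    ∃ s, (s = p ∨ s = q) ∧ #{i | f i ≠ s} < d := by
  have hsub : #{i | f i ≠ p} ≤ #{i | f i = q} :=
    card_le_card (monotone_filter_right _ fun i _ hp => (hf i).resolve_left hp)
  have hsplit : #{i | f i = q} + #{i | f i ≠ q} = Fintype.card ι :=
    card_filter_add_card_filter_not (fun i => f i = q)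
  by_contra! h
  have hp := h p (.inl rfl)
  have hq := h q (.inr rfl)
  omega

section TightFrame

variable {𝕜 E ι : Type*} [RCLike 𝕜] [NormedAddCommGroup E] [InnerProductSpace 𝕜 E]

lemma exists_ne_zero_forall_inner_eq_zero [FiniteDimensional 𝕜 E] (u : ι → E) (S : Finset ι)
    (hS : #S < finrank 𝕜 E) : ∃ v ≠ (0 : E), ∀ i ∈ S, ⟪u i, v⟫_𝕜 = 0 := by
  classical
  set K := Submodule.span 𝕜 (S.image u : Set E)
  have hK : K ≠ ⊤ := by
    refine (span_lt_top_of_card_lt_finrank ?_).ne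
    simpa using (Finset.card_image_le).trans_lt hS
  obtain ⟨v, hv, hv0⟩ := Submodule.exists_mem_ne_zero_of_ne_bot
    (mt Submodule.orthogonal_eq_bot_iff.mp hK)
  refine ⟨v, hv0, fun i hi => ?_⟩
  exact Submodule.inner_right_of_mem_orthogonal
    (Submodule.subset_span (Finset.mem_coe.mpr (Finset.mem_image_of_mem u hi))) hv

lemma norm_le_opNorm_of_apply_eq_smul (T : E →L[𝕜] E) {v : E} (hv : v ≠ 0) {μ : 𝕜}
    (hT : T v = μ • v) : ‖μ‖ ≤ ‖T‖ := by
  have := T.le_opNorm v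
  rw [hT, norm_smul] at this
  exact le_of_mul_le_mul_right this (norm_pos_iff.mpr hv)

variable [Fintype ι]

variable (𝕜) in
def IsTightFrame (u : ι → E) (c : ℝ) : Prop :=
  ∑ i, rankOne 𝕜 (u i) (u i) = (c : 𝕜) • 1

namespace IsTightFrame

variable {u : ι → E} {c : ℝ}

lemma sum_inner_smul (h : IsTightFrame 𝕜 u c) (x : E) :
    ∑ i, ⟪u i, x⟫_𝕜 • u i = (c : 𝕜) • x := by
  simpa using congrArg (· x) h

lemma sum_norm_inner_sq (h : IsTightFrame 𝕜 u c) (x : E) :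
    ∑ i, ‖⟪u i, x⟫_𝕜‖ ^ 2 = c * ‖x‖ ^ 2 := by
  have hx := congrArg (⟪x, ·⟫_𝕜) (h.sum_inner_smul x)
  simp only [inner_sum, inner_smul_right, inner_self_eq_norm_sq_to_K] at hx
  have hterm : ∀ i, ⟪u i, x⟫_𝕜 * ⟪x, u i⟫_𝕜 = ((‖⟪u i, x⟫_𝕜‖ ^ 2 : ℝ) : 𝕜) := fun i => by
    rw [← inner_conj_symm x (u i), RCLike.mul_conj]
    norm_cast
  simp only [hterm] at hx
  exact_mod_cast hx

lemma sum_smul_rankOne_apply_of_forall_eq_or (h : IsTightFrame 𝕜 u c) {a : ι → ℝ} {s : ℝ}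
    {v : E} (hv : ∀ i, a i = s ∨ ⟪u i, v⟫_𝕜 = 0) :
    (∑ i, (a i : 𝕜) • rankOne 𝕜 (u i) (u i)) v = ((s * c : ℝ) : 𝕜) • v := by
  have hterm : ∀ i, (a i : 𝕜) • ⟪u i, v⟫_𝕜 • u i = (s : 𝕜) • ⟪u i, v⟫_𝕜 • u i := fun i => by
    rcases hv i with ha | hv0
    · rw [ha]
    · simp [hv0]
  calc (∑ i, (a i : 𝕜) • rankOne 𝕜 (u i) (u i)) v = ∑ i, (s : 𝕜) • ⟪u i, v⟫_𝕜 • u i := by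
        simp only [_root_.sum_apply, _root_.smul_apply, rankOne_apply, hterm]
    _ = ((s * c : ℝ) : 𝕜) • v := by
        rw [← smul_sum, h.sum_inner_smul, smul_smul]
        push_cast
        rfl

end IsTightFrame

lemma norm_sum_smul_rankOne_le {u : ι → E} {c : ℝ} (hc : 0 ≤ c)
    (hbessel : ∀ x, ∑ i, ‖⟪u i, x⟫_𝕜‖ ^ 2 ≤ c * ‖x‖ ^ 2) {a : ι → ℝ} (ha : ∀ i, |a i| ≤ 1) :
    ‖∑ i, (a i : 𝕜) • rankOne 𝕜 (u i) (u i)‖ ≤ c := by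
  refine ContinuousLinearMap.opNorm_le_bound _ hc fun x => ?_
  set y := (∑ i, (a i : 𝕜) • rankOne 𝕜 (u i) (u i)) x
  have hy_eq : y = ∑ i, (a i : 𝕜) • ⟪u i, x⟫_𝕜 • u i := by
    simp only [y, _root_.sum_apply, _root_.smul_apply, rankOne_apply]
  have hy : ‖y‖ ^ 2 ≤ ∑ i, ‖⟪u i, x⟫_𝕜‖ * ‖⟪u i, y⟫_𝕜‖ := calc
    ‖y‖ ^ 2 = ‖⟪y, y⟫_𝕜‖ := by
      rw [inner_self_eq_norm_sq_to_K, norm_pow, RCLike.norm_ofReal, abs_norm]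
    _ = ‖∑ i, (a i : 𝕜) * ⟪u i, x⟫_𝕜 * ⟪y, u i⟫_𝕜‖ := by
      nth_rw 2 [hy_eq]
      simp only [inner_sum, inner_smul_right, mul_assoc]
    _ ≤ ∑ i, ‖(a i : 𝕜) * ⟪u i, x⟫_𝕜 * ⟪y, u i⟫_𝕜‖ := norm_sum_le _ _
    _ ≤ ∑ i, ‖⟪u i, x⟫_𝕜‖ * ‖⟪u i, y⟫_𝕜‖ := sum_le_sum fun i _ => by
      rw [norm_mul, norm_mul, RCLike.norm_ofReal, norm_inner_symm y (u i), mul_assoc]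
      exact mul_le_of_le_one_left (by positivity) (ha i)
  have hcs := sum_mul_sq_le_sq_mul_sq univ (fun i => ‖⟪u i, x⟫_𝕜‖) fun i => ‖⟪u i, y⟫_𝕜‖
  have hsq : (‖y‖ ^ 2) ^ 2 ≤ (c * ‖x‖ * ‖y‖) ^ 2 := calc
    (‖y‖ ^ 2) ^ 2 ≤ (∑ i, ‖⟪u i, x⟫_𝕜‖ * ‖⟪u i, y⟫_𝕜‖) ^ 2 := by gcongr
    _ ≤ (c * ‖x‖ ^ 2) * (c * ‖y‖ ^ 2) :=
      hcs.trans (mul_le_mul (hbessel x) (hbessel y) (by positivity) (by positivity))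
    _ = (c * ‖x‖ * ‖y‖) ^ 2 := by ring
  have hle : ‖y‖ ^ 2 ≤ c * ‖x‖ * ‖y‖ :=
    (pow_le_pow_iff_left₀ (by positivity) (by positivity) two_ne_zero).mp hsq
  rcases (norm_nonneg y).eq_or_lt with hy0 | hy0
  · rw [← hy0]; positivity
  · exact le_of_mul_le_mul_right (by rwa [sq] at hle) hy0

end TightFrame

lemma toEuclideanCLM_outer {d : ℕ} (u : EuclideanSpace ℂ (Fin d)) :
    toEuclideanCLM (𝕜 := ℂ) (outer u) = rankOne ℂ u u := by
  ext1 x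
  change toEuclideanLin (outer u) x = _
  rw [outer, ← symm_toEuclideanLin_rankOne, LinearEquiv.apply_symm_apply]
  rfl

theorem norm_signed_sum_eq_general {d n : ℕ} (hn : n ≤ 2 * d - 1)
    (u : Fin n → EuclideanSpace ℂ (Fin d))
    (hframe : ∑ i, outer (u i)
      = ((n : ℂ) / (d : ℂ)) • (1 : Matrix (Fin d) (Fin d) ℂ))
    (ε : Fin n → ℝ) (hε : ∀ i, ε i = 1 ∨ ε i = -1) :
    specNorm (∑ i, ((ε i : ℂ)) • outer (u i)) = (n : ℝ) / d := by
  have htight : IsTightFrame ℂ u ((n : ℝ) / d) := by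
    simpa [IsTightFrame, toEuclideanCLM_outer] using
      congrArg (fun A => toEuclideanCLM (𝕜 := ℂ) A) hframe
  have hT : toEuclideanCLM (𝕜 := ℂ) (∑ i, (ε i : ℂ) • outer (u i))
      = ∑ i, (ε i : ℂ) • rankOne ℂ (u i) (u i) := by
    simp only [map_sum, _root_.map_smul, toEuclideanCLM_outer]
  rw [specNorm, hT]
  refine le_antisymm (norm_sum_smul_rankOne_le (by positivity)
    (fun x => (htight.sum_norm_inner_sq x).le) fun i => by rcases hε i with h | h <;> simp [h]) ?_
  rcases Nat.eq_zero_or_pos n with rfl | hn0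
  · simp
  obtain ⟨s, hs, hcard⟩ := exists_card_filter_ne_lt hε (d := d) (by simp; omega)
  obtain ⟨v, hv0, hv⟩ := exists_ne_zero_forall_inner_eq_zero (𝕜 := ℂ) u _
    (by rwa [finrank_euclideanSpace_fin])
  have heig := htight.sum_smul_rankOne_apply_of_forall_eq_or (a := ε) (s := s)
    fun i => or_iff_not_imp_left.mpr fun h => hv i (by simpa using h)
  have := norm_le_opNorm_of_apply_eq_smul _ hv0 heig
  rcases hs with rfl | rfl <;> simpa using this

/-- if `∑ u_i u_i* = (n/d)·I` and `n ≤ 2d−1`, then for any signs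
`ε_i ∈ {−1,1}` the spectral norm of `∑ ε_i u_i u_i*` equals `n/d`. -/
theorem norm_signed_sum_eq {d n : ℕ} (hd : 0 < d) (hn : n ≤ 2 * d - 1)
    (u : Fin n → EuclideanSpace ℂ (Fin d))
    (hframe : ∑ i, outer (u i)
      = ((n : ℂ) / (d : ℂ)) • (1 : Matrix (Fin d) (Fin d) ℂ))
    (ε : Fin n → ℝ) (hε : ∀ i, ε i = 1 ∨ ε i = -1) :
    specNorm (∑ i, ((ε i : ℂ)) • outer (u i)) = (n : ℝ) / d :=
  norm_signed_sum_eq_general hn u hframe ε hε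
end

section
/- Let s(x) be a real-rooted quadratic polynomial in one variable with positive leading coefficient, and let Φ_s(x) = s'(x)/s(x) be its barrier function. Then the function f(x) = x − 2/Φ_s(x) is nonincreasing on the set of x strictly greater than the largest root of s. -/
open Polynomial

/-!
By the partial-fraction expansion of the logarithmic derivative of a split polynomial,
`Φ_s(x) = 1/(x - a) + 1/(x - b)`, so the leading coefficient drops out. With `m = (a + b)/2`
and `d = (a - b)/2` one gets `x - 2/Φ_s(x) = m + d²/(x - m)`, which decreases for `x > m`.
-/

theorem sub_two_div_inv_add_inv_eq {a b x : ℝ} (ha : x - a ≠ 0) (hb : x - b ≠ 0)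
    (hm : x - (a + b) / 2 ≠ 0) :
    x - 2 / ((x - a)⁻¹ + (x - b)⁻¹) = (a + b) / 2 + ((a - b) / 2) ^ 2 / (x - (a + b) / 2) := by
  have hsum : (x - a)⁻¹ + (x - b)⁻¹ = 2 * (x - (a + b) / 2) / ((x - a) * (x - b)) := by
    field_simp
    ring
  rw [hsum, div_div_eq_mul_div, mul_div_mul_left _ _ two_ne_zero, sub_eq_iff_eq_add, add_assoc,
    ← add_div, show ((a - b) / 2) ^ 2 + (x - a) * (x - b) = (x - (a + b) / 2) ^ 2 by ring,
    sq, mul_div_cancel_right₀ _ hm]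
  ring

theorem antitoneOn_sub_two_div_inv_add_inv (a b : ℝ) :
    AntitoneOn (fun x : ℝ => x - 2 / ((x - a)⁻¹ + (x - b)⁻¹)) {x | a < x ∧ b < x} := by
  rintro x ⟨hax, hbx⟩ y ⟨hay, hby⟩ hxy
  have hmx : 0 < x - (a + b) / 2 := by linarith
  dsimp only
  rw [sub_two_div_inv_add_inv_eq (sub_pos.2 hax).ne' (sub_pos.2 hbx).ne' hmx.ne',
    sub_two_div_inv_add_inv_eq (sub_pos.2 hay).ne' (sub_pos.2 hby).ne' (by linarith)]
  gcongr

theorem barrier_shift_antitone_general (s : Polynomial ℝ)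
    (hdeg : s.natDegree = 2)
    (hroots : s.roots.card = 2) :
    AntitoneOn
      (fun x : ℝ => x - 2 / (Polynomial.eval x (Polynomial.derivative s) /
        Polynomial.eval x s))
      {x : ℝ | ∀ r ∈ s.roots, r < x} := by
  obtain ⟨a, b, hab⟩ := Multiset.card_eq_two.mp hroots
  have hsplit : s.Splits := splits_iff_card_roots.mpr (hroots.trans hdeg.symm)
  have hs0 : s ≠ 0 := ne_zero_of_natDegree_gt (n := 0) (by omega)
  have hsub : {x : ℝ | ∀ r ∈ s.roots, r < x} ⊆ {x | a < x ∧ b < x} := fun x hx =>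
    ⟨hx a (by simp [hab]), hx b (by simp [hab])⟩
  refine ((antitoneOn_sub_two_div_inv_add_inv a b).mono hsub).congr fun x hx => ?_
  have hx0 : s.eval x ≠ 0 := fun h => (hx x ((mem_roots hs0).mpr h)).false
  simp [hsplit.eval_derivative_div_eval_of_ne_zero hx0, hab]

/-- for a real-rooted quadratic `s` with positive leading
coefficient, the function `x ↦ x − 2/Φ_s(x)`, where `Φ_s = s'/s`, is
nonincreasing on the set of points strictly above the largest root of `s`. -/
theorem barrier_shift_antitone (s : Polynomial ℝ)
    (hdeg : s.natDegree = 2) (hlead : 0 < s.leadingCoeff)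
    (hroots : s.roots.card = 2) :
    AntitoneOn
      (fun x : ℝ => x - 2 / (Polynomial.eval x (Polynomial.derivative s) /
        Polynomial.eval x s))
      {x : ℝ | ∀ r ∈ s.roots, r < x} :=
  barrier_shift_antitone_general s hdeg hroots
end

section
/- Suppose ε = (ε_1,...,ε_n) ∈ {−1,1}^n, and let h_1,...,h_{2^n} enumerate all vectors of {−1,1}^n. Define diagonal matrices A_i = Diag(h_{1,i},...,h_{2^n,i}) for i = 1,...,n. Then the spectral norm of the diagonal matrix sum_{i=1}^n ε_i A_i equals n, and in particular is at least sqrt(n·log_2(d)) where d = 2^n, showing the factor sqrt(log d) in the matrix Hoeffding bound cannot be removed. -/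
open Matrix BigOperators

noncomputable def specNormR {d : ℕ} (A : Matrix (Fin d) (Fin d) ℝ) : ℝ :=
  ‖Matrix.toEuclideanCLM (𝕜 := ℝ) A‖

lemma clm_diag_apply {d : ℕ} (v : Fin d → ℝ) (x : EuclideanSpace ℝ (Fin d)) (k : Fin d) :
    (Matrix.toEuclideanCLM (𝕜 := ℝ) (Matrix.diagonal v) x) k = v k * x k := by
  have := congrFun (Matrix.ofLp_toEuclideanCLM (Matrix.diagonal v) x) k
  simpa [Matrix.mulVec_diagonal] using this

lemma specNormR_diagonal_eq {d : ℕ} (v : Fin d → ℝ) (c : ℝ) (hc : 0 ≤ c)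
    (hle : ∀ k, |v k| ≤ c) (k₀ : Fin d) (hk₀ : v k₀ = c) :
    specNormR (Matrix.diagonal v) = c := by
  set A := Matrix.toEuclideanCLM (𝕜 := ℝ) (Matrix.diagonal v)
  apply le_antisymm
  · apply ContinuousLinearMap.opNorm_le_bound _ hc
    intro x
    have h1 : ‖A x‖ = Real.sqrt (∑ k, ‖v k * x k‖ ^ 2) := by
      rw [EuclideanSpace.norm_eq]
      congr 1
      exact Finset.sum_congr rfl fun k _ => by rw [clm_diag_apply]
    rw [h1, EuclideanSpace.norm_eq]
    rw [show c * Real.sqrt (∑ k, ‖x k‖ ^ 2) = Real.sqrt (c ^ 2 * ∑ k, ‖x k‖ ^ 2) by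
      rw [Real.sqrt_mul (sq_nonneg c), Real.sqrt_sq hc]]
    apply Real.sqrt_le_sqrt
    rw [Finset.mul_sum]
    apply Finset.sum_le_sum
    intro k _
    rw [norm_mul, mul_pow]
    apply mul_le_mul_of_nonneg_right _ (sq_nonneg _)
    have := hle k
    rw [Real.norm_eq_abs]
    nlinarith [abs_nonneg (v k)]
  · have hx : ‖(EuclideanSpace.single k₀ (1:ℝ))‖ = 1 := by
      simp [EuclideanSpace.norm_single]
    have h2 : ‖A (EuclideanSpace.single k₀ (1:ℝ))‖ = c := by
      rw [EuclideanSpace.norm_eq]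
      have : ∀ k, ‖v k * (EuclideanSpace.single k₀ (1:ℝ)) k‖ ^ 2
          = if k = k₀ then c ^ 2 else 0 := by
        intro k
        by_cases hk : k = k₀
        · subst hk; simp [EuclideanSpace.single_apply, hk₀, sq_abs]
        · simp [EuclideanSpace.single_apply, hk]
      calc Real.sqrt (∑ k, ‖(A (EuclideanSpace.single k₀ (1:ℝ))) k‖ ^ 2)
          = Real.sqrt (∑ k, if k = k₀ then c ^ 2 else 0) := by
            congr 1
            exact Finset.sum_congr rfl fun k _ => by rw [clm_diag_apply, this k]
        _ = Real.sqrt (c ^ 2) := by rw [Finset.sum_ite_eq' Finset.univ k₀ (fun _ => c ^ 2)]; simp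
        _ = c := Real.sqrt_sq hc
    calc c = ‖A (EuclideanSpace.single k₀ (1:ℝ))‖ := h2.symm
      _ ≤ ‖A‖ * ‖(EuclideanSpace.single k₀ (1:ℝ))‖ := A.le_opNorm _
      _ = ‖A‖ := by rw [hx, mul_one]

/-- let `h₁,…,h_{2^n}` enumerate all vectors of `{−1,1}^n` and
set `Aᵢ = Diag(h_{1,i},…,h_{2^n,i})`.  Then for every sign vector `ε`,
`‖∑ εᵢAᵢ‖ = n`, and in particular `‖∑ εᵢAᵢ‖ ≥ √(n·log₂ d)` with `d = 2^n`. -/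
theorem diag_construction_norm (n : ℕ) (h : Fin (2 ^ n) → (Fin n → ℝ))
    (hinj : Function.Injective h) (hsign : ∀ k i, h k i = 1 ∨ h k i = -1)
    (ε : Fin n → ℝ) (hε : ∀ i, ε i = 1 ∨ ε i = -1) :
    specNormR (∑ i, ε i • Matrix.diagonal (fun k => h k i)) = (n : ℝ) ∧
    Real.sqrt ((n : ℝ) * Real.logb 2 ((2 : ℝ) ^ n))
      ≤ specNormR (∑ i, ε i • Matrix.diagonal (fun k => h k i)) := by
  classical
  -- find k₀ with h k₀ = ε
  set h' : Fin (2 ^ n) → (Fin n → Bool) := fun k i => decide (h k i = 1) with hh'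
  have hinj' : Function.Injective h' := by
    intro a b hab
    apply hinj
    funext i
    have hab' := congrFun hab i
    rcases hsign a i with ha | ha <;> rcases hsign b i with hb | hb <;>
      simp [hh', ha, hb] at hab' ⊢ <;> linarith
  have hbij : Function.Bijective h' := by
    rw [Fintype.bijective_iff_injective_and_card]
    exact ⟨hinj', by simp⟩
  obtain ⟨k₀, hk₀'⟩ := hbij.surjective (fun i => decide (ε i = 1))
  have hk₀ : h k₀ = ε := by
    funext i
    have := congrFun hk₀' i
    rcases hsign k₀ i with ha | ha <;> rcases hε i with hb | hb <;>
      simp [hh', ha, hb] at this ⊢ <;> linarith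
  set v : Fin (2 ^ n) → ℝ := fun k => ∑ i, ε i * h k i with hv
  have hM : (∑ i, ε i • Matrix.diagonal (fun k => h k i)) = Matrix.diagonal v := by
    ext a b
    by_cases hab : a = b
    · subst hab; simp [Matrix.sum_apply, Matrix.diagonal_apply, hv]
    · simp [Matrix.sum_apply, Matrix.diagonal_apply, hab]
  have habs1 : ∀ i, |ε i| = 1 := fun i => by rcases hε i with h1 | h1 <;> simp [h1]
  have hle : ∀ k, |v k| ≤ (n : ℝ) := by
    intro k
    calc |v k| ≤ ∑ i, |ε i * h k i| := Finset.abs_sum_le_sum_abs _ _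
      _ = ∑ i : Fin n, (1 : ℝ) := by
          apply Finset.sum_congr rfl
          intro i _
          rw [abs_mul, habs1 i]
          rcases hsign k i with h1 | h1 <;> simp [h1]
      _ = (n : ℝ) := by simp
  have hvk₀ : v k₀ = (n : ℝ) := by
    rw [hv]
    simp only [hk₀]
    calc (∑ i, ε i * ε i) = ∑ i : Fin n, (1 : ℝ) := by
          apply Finset.sum_congr rfl
          intro i _
          rcases hε i with h1 | h1 <;> simp [h1]
      _ = (n : ℝ) := by simp
  have hnorm : specNormR (∑ i, ε i • Matrix.diagonal (fun k => h k i)) = (n : ℝ) := by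
    rw [hM]
    exact specNormR_diagonal_eq v (n : ℝ) (Nat.cast_nonneg n) hle k₀ hvk₀
  refine ⟨hnorm, ?_⟩
  rw [hnorm]
  have : Real.logb 2 ((2 : ℝ) ^ n) = n := by
    rw [Real.logb_pow, Real.logb_self_eq_one] <;> norm_num
  rw [this, Real.sqrt_mul_self (Nat.cast_nonneg n)]
end
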